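/- arXiv:2012.09459 — 4 statements merged into one kernel-verified Lean document; each statement's English description precedes it below -/
import Mathlib

section
/- The function d_f(x,y) := f(x) + f(y) - 2·sup over paths γ from x to y of min over t∈[0,1] of f(γ(t)) is a pseudo-metric on M; that is, it is nonnegative, symmetric, vanishes on the diagonal, and satisfies the triangle inequality. -/
/-!
With `h(x, y) := mergeHeight f x y`, the sup over paths of the min of `f`, one has
`d_f(x, y) = f x + f y - 2 h(x, y)`. Every path from `x` to `y` passes through both endpoints,
so `h(x, y) ≤ min (f x) (f y)`, which gives nonnegativity; the constant path gives
`h(x, x) = f x`. Concatenating paths yields the ultrametric-type inequality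
`min (h(x, y)) (h(y, z)) ≤ h(x, z)`, and since `h(x, y)` and `h(y, z)` are both at most `f y`,
their sum is at most `f y + h(x, z)`: this is the triangle inequality for `d_f`.
All the infima involved are honest minima because path ranges are compact.
-/

open Set

/-- `d_f(x,y) = f x + f y - 2 * sup over paths γ from x to y of (min of f along γ)`. -/
noncomputable def treeDist {M : Type*} [TopologicalSpace M] (f : M → ℝ) (x y : M) : ℝ :=
  f x + f y - 2 * sSup {m : ℝ | ∃ γ : Path x y, m = sInf (f '' Set.range γ)}

section

variable {X : Type*} [TopologicalSpace X] {f : X → ℝ} {x y z : X}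

namespace Path

theorem bddBelow_image_range (hf : Continuous f) (γ : Path x y) : BddBelow (f '' range γ) :=
  ((isCompact_range γ.continuous).image hf).bddBelow

theorem sInf_image_range_le (hf : Continuous f) (γ : Path x y) (t : unitInterval) :
    sInf (f '' range γ) ≤ f (γ t) :=
  csInf_le (bddBelow_image_range hf γ) ⟨γ t, mem_range_self t, rfl⟩

theorem sInf_image_range_le_source (hf : Continuous f) (γ : Path x y) :
    sInf (f '' range γ) ≤ f x := by
  simpa using sInf_image_range_le hf γ 0

theorem sInf_image_range_le_target (hf : Continuous f) (γ : Path x y) :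
    sInf (f '' range γ) ≤ f y := by
  simpa using sInf_image_range_le hf γ 1

theorem sInf_image_range_trans (hf : Continuous f) (γ : Path x y) (δ : Path y z) :
    sInf (f '' range (γ.trans δ)) = min (sInf (f '' range γ)) (sInf (f '' range δ)) := by
  rw [trans_range, image_union, csInf_union (bddBelow_image_range hf γ)
    ((range_nonempty γ).image f) (bddBelow_image_range hf δ) ((range_nonempty δ).image f)]

end Path

noncomputable def mergeHeight (f : X → ℝ) (x y : X) : ℝ :=
  sSup {m : ℝ | ∃ γ : Path x y, m = sInf (f '' range γ)}

theorem treeDist_eq_mergeHeight (f : X → ℝ) (x y : X) :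
    treeDist f x y = f x + f y - 2 * mergeHeight f x y :=
  rfl

theorem mergeHeight_comm (f : X → ℝ) (x y : X) : mergeHeight f x y = mergeHeight f y x := by
  unfold mergeHeight
  congr 1
  ext m
  constructor <;> rintro ⟨γ, rfl⟩ <;> exact ⟨γ.symm, by rw [Path.symm_range]⟩

theorem bddAbove_setOf_sInf_image_range (hf : Continuous f) (x y : X) :
    BddAbove {m : ℝ | ∃ γ : Path x y, m = sInf (f '' range γ)} :=
  ⟨f x, by rintro m ⟨γ, rfl⟩; exact γ.sInf_image_range_le_source hf⟩

theorem nonempty_setOf_sInf_image_range (f : X → ℝ) (h : Joined x y) :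
    {m : ℝ | ∃ γ : Path x y, m = sInf (f '' range γ)}.Nonempty :=
  ⟨_, h.somePath, rfl⟩

theorem sInf_image_range_le_mergeHeight (hf : Continuous f) (γ : Path x y) :
    sInf (f '' range γ) ≤ mergeHeight f x y :=
  le_csSup (bddAbove_setOf_sInf_image_range hf x y) ⟨γ, rfl⟩

theorem mergeHeight_le_left (hf : Continuous f) (h : Joined x y) : mergeHeight f x y ≤ f x :=
  csSup_le (nonempty_setOf_sInf_image_range f h) fun _ ⟨γ, hγ⟩ =>
    hγ ▸ γ.sInf_image_range_le_source hf

theorem mergeHeight_le_right (hf : Continuous f) (h : Joined x y) : mergeHeight f x y ≤ f y := by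
  rw [mergeHeight_comm]
  exact mergeHeight_le_left hf h.symm

theorem mergeHeight_self (hf : Continuous f) (x : X) : mergeHeight f x x = f x := by
  refine le_antisymm (mergeHeight_le_left hf (Joined.refl x)) ?_
  simpa using sInf_image_range_le_mergeHeight hf (Path.refl x)

theorem min_mergeHeight_le_mergeHeight (hf : Continuous f) (hxy : Joined x y)
    (hyz : Joined y z) : min (mergeHeight f x y) (mergeHeight f y z) ≤ mergeHeight f x z := by
  by_contra! hlt
  obtain ⟨_, ⟨γ, rfl⟩, hγ⟩ :=
    exists_lt_of_lt_csSup (nonempty_setOf_sInf_image_range f hxy) (lt_min_iff.1 hlt).1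
  obtain ⟨_, ⟨δ, rfl⟩, hδ⟩ :=
    exists_lt_of_lt_csSup (nonempty_setOf_sInf_image_range f hyz) (lt_min_iff.1 hlt).2
  have hγδ := sInf_image_range_le_mergeHeight hf (γ.trans δ)
  rw [Path.sInf_image_range_trans hf] at hγδ
  exact (lt_min hγ hδ).not_ge hγδ

theorem mergeHeight_add_mergeHeight_le (hf : Continuous f) (hxy : Joined x y)
    (hyz : Joined y z) : mergeHeight f x y + mergeHeight f y z ≤ f y + mergeHeight f x z := by
  have hmax : max (mergeHeight f x y) (mergeHeight f y z) ≤ f y :=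
    max_le (mergeHeight_le_right hf hxy) (mergeHeight_le_left hf hyz)
  linarith [min_add_max (mergeHeight f x y) (mergeHeight f y z),
    min_mergeHeight_le_mergeHeight hf hxy hyz]

end

theorem treeDist_pseudoMetric_general {M : Type*} [TopologicalSpace M]
    [ConnectedSpace M] [LocallyPathConnectedSpace M] (f : M → ℝ) (hf : Continuous f) :
    (∀ x y : M, 0 ≤ treeDist f x y) ∧
    (∀ x y : M, treeDist f x y = treeDist f y x) ∧
    (∀ x : M, treeDist f x x = 0) ∧
    (∀ x y z : M, treeDist f x z ≤ treeDist f x y + treeDist f y z) := by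
  have : PathConnectedSpace M := pathConnectedSpace_iff_connectedSpace.mpr ‹_›
  simp only [treeDist_eq_mergeHeight]
  refine ⟨fun x y => ?_, fun x y => ?_, fun x => ?_, fun x y z => ?_⟩
  · linarith [mergeHeight_le_left hf (PathConnectedSpace.joined x y),
      mergeHeight_le_right hf (PathConnectedSpace.joined x y)]
  · rw [mergeHeight_comm f x y, add_comm (f x)]
  · rw [mergeHeight_self hf]
    ring
  · linarith [mergeHeight_add_mergeHeight_le hf (PathConnectedSpace.joined x y)
      (PathConnectedSpace.joined y z)]

/-- For a connected, locally path-connected, compact space `M` and continuous `f : M → ℝ`,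
`d_f` is a pseudo-metric: nonnegative, symmetric, vanishing on the diagonal, and
satisfying the triangle inequality. -/
theorem treeDist_pseudoMetric {M : Type*} [TopologicalSpace M] [CompactSpace M]
    [ConnectedSpace M] [LocallyPathConnectedSpace M] (f : M → ℝ) (hf : Continuous f) :
    (∀ x y : M, 0 ≤ treeDist f x y) ∧
    (∀ x y : M, treeDist f x y = treeDist f y x) ∧
    (∀ x : M, treeDist f x x = 0) ∧
    (∀ x y z : M, treeDist f x z ≤ treeDist f x y + treeDist f y z) :=
  treeDist_pseudoMetric_general f hf
end

section
/- For a continuous function f : [0,1] → ℝ and any δ > 0, N^ε_f = O(ε^{−V(f)−δ}) as ε → 0, where V(f) = inf{p ≥ 1 : ‖f‖_{p-var} < ∞}. -/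
open Set
open scoped ENNReal

/-- Number of bars of length `≥ ε` in the degree-0 persistence barcode of the
superlevel-set filtration of `f` on `[0,t]` (infinite bar capped at `[inf f, sup f]`):
the maximal number of points of `[0,t]`, each at height `≥ ε` above the global minimum,
such that between any two of them `f` dips at least `ε` below both. -/
noncomputable def barsCount (f : ℝ → ℝ) (t ε : ℝ) : ℕ :=
  sSup {k : ℕ | ∃ u : Fin k → ℝ,
    (∀ i, u i ∈ Icc (0:ℝ) t) ∧
    (∀ i, sInf (f '' Icc (0:ℝ) t) + ε ≤ f (u i)) ∧
    (∀ i j : Fin k, i < j →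
      u i < u j ∧ sInf (f '' Icc (u i) (u j)) ≤ min (f (u i)) (f (u j)) - ε)}

/-- The set of `p`-variation partition sums `Σ |f(t_k) - f(t_{k-1})|^p` of `f` over finite
partitions `0 = t_0 < t_1 < ... < t_m = 1` of `[0,1]`. -/
def pVarSums (f : ℝ → ℝ) (p : ℝ) : Set ℝ :=
  {S : ℝ | ∃ (m : ℕ) (u : ℕ → ℝ), u 0 = 0 ∧ u m = 1 ∧ (∀ i < m, u i < u (i + 1)) ∧
    S = ∑ i ∈ Finset.range m, |f (u (i + 1)) - f (u i)| ^ p}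

/-- `V(f) = inf {p ≥ 1 | ‖f‖_{p-var} < ∞}`, as an extended nonnegative real
(`⊤` if no `p ≥ 1` has finite `p`-variation). -/
noncomputable def varIndex (f : ℝ → ℝ) : ℝ≥0∞ :=
  sInf {q : ℝ≥0∞ | ∃ p : ℝ, q = ENNReal.ofReal p ∧ 1 ≤ p ∧ BddAbove (pVarSums f p)}

/-! Between two consecutive bar points `u i < u (i+1)` the function dips by `ε` at some `v i`, so
the zigzag `u 0 < v 0 < u 1 < v 1 < ⋯ < u (k-1)` has `2(k-1)` jumps of size `≥ ε`. Completed to a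
partition of `[0,1]`, it gives a `p`-variation sum `≥ 2(k-2) εᵖ`; hence if the `p`-variation sums
are bounded by `M`, then `N^ε_f ≤ M ε⁻ᵖ / 2 + 2`, and any `p < V(f) + δ` with finite `p`-variation
yields the claim. -/

section Interleave

variable {α : Type*}

def interleave (U V : ℕ → α) (j : ℕ) : α := if Even j then U (j / 2) else V (j / 2)

@[simp]
theorem interleave_two_mul (U V : ℕ → α) (i : ℕ) : interleave U V (2 * i) = U i := by
  simp [interleave]

@[simp]
theorem interleave_zero (U V : ℕ → α) : interleave U V 0 = U 0 :=
  interleave_two_mul U V 0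

@[simp]
theorem interleave_two_mul_add_one (U V : ℕ → α) (i : ℕ) :
    interleave U V (2 * i + 1) = V i := by
  simp [interleave, show (2 * i + 1) / 2 = i by omega]

@[simp]
theorem interleave_two_mul_add_two (U V : ℕ → α) (i : ℕ) :
    interleave U V (2 * i + 1 + 1) = U (i + 1) :=
  interleave_two_mul U V (i + 1)

end Interleave

theorem Nat.forall_lt_two_mul_iff {P : ℕ → Prop} {m : ℕ} :
    (∀ j < 2 * m, P j) ↔ ∀ i < m, P (2 * i) ∧ P (2 * i + 1) := by
  refine ⟨fun h i hi => ⟨h _ (by omega), h _ (by omega)⟩, fun h j hj => ?_⟩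
  obtain ⟨i, rfl | rfl⟩ := Nat.even_or_odd' j
  · exact (h i (by omega)).1
  · exact (h i (by omega)).2

theorem Nat.cast_sSup_le {s : Set ℕ} {B : ℝ} (hs : s.Nonempty) (hB : ∀ k ∈ s, (k : ℝ) ≤ B) :
    ((sSup s : ℕ) : ℝ) ≤ B :=
  hB _ (Nat.sSup_mem hs ⟨⌊B⌋₊, fun k hk => Nat.le_floor (hB k hk)⟩)

theorem ContinuousOn.exists_mem_Ioo_le_sub_of_sInf_le {f : ℝ → ℝ} {a b ε : ℝ} (hab : a ≤ b)
    (hf : ContinuousOn f (Icc a b)) (hε : 0 < ε)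
    (h : sInf (f '' Icc a b) ≤ min (f a) (f b) - ε) :
    ∃ v ∈ Ioo a b, ε ≤ f a - f v ∧ ε ≤ f b - f v := by
  obtain ⟨v, hv, hfv⟩ :=
    (isCompact_Icc.image_of_continuousOn hf).sInf_mem ((nonempty_Icc.2 hab).image f)
  rw [← hfv] at h
  have ha : ε ≤ f a - f v := by linarith [min_le_left (f a) (f b)]
  have hb : ε ≤ f b - f v := by linarith [min_le_right (f a) (f b)]
  refine ⟨v, ⟨hv.1.lt_of_ne ?_, hv.2.lt_of_ne ?_⟩, ha, hb⟩ <;> rintro rfl <;> linarith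

theorem rpow_abs_sub_mem_pVarSums (f : ℝ → ℝ) (p : ℝ) : |f 1 - f 0| ^ p ∈ pVarSums f p :=
  ⟨1, fun n => n, by simp, by simp, fun i _ => by simp, by simp⟩

theorem nonneg_of_mem_upperBounds_pVarSums {f : ℝ → ℝ} {p M : ℝ}
    (hM : M ∈ upperBounds (pVarSums f p)) : 0 ≤ M :=
  (Real.rpow_nonneg (abs_nonneg _) p).trans (hM (rpow_abs_sub_mem_pVarSums f p))

theorem exists_mem_pVarSums_ge {f : ℝ → ℝ} {p ε : ℝ} (hp : 0 ≤ p) (hε : 0 ≤ ε) {n : ℕ}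
    (hn : 1 ≤ n) {z : ℕ → ℝ} (hz₀ : 0 ≤ z 0) (hz₁ : z n ≤ 1) (hz : ∀ j < n, z j < z (j + 1))
    (hjump : ∀ j < n, ε ≤ |f (z (j + 1)) - f (z j)|) :
    ∃ S ∈ pVarSums f p, ((n - 2 : ℕ) : ℝ) * ε ^ p ≤ S := by
  -- Moving the two ends of `z` to `0` and `1` spoils at most the two outer jumps.
  set w : ℕ → ℝ := fun j => if j = 0 then 0 else if j = n then 1 else z j
  have hw : ∀ j, 0 < j → j < n → w j = z j := fun j h₀ h₁ => by simp [w, h₀.ne', h₁.ne]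
  have hw_mono : ∀ i < n, w i < w (i + 1) := by
    intro i hi
    rcases Nat.eq_zero_or_pos i with rfl | hi₀
    · rcases hn.eq_or_lt with rfl | hn₁
      · simp [w]
      · rw [hw 1 one_pos hn₁]
        simpa [w] using hz₀.trans_lt (hz 0 hi)
    · rcases (show i + 1 ≤ n by omega).eq_or_lt with h | h
      · rw [hw i hi₀ hi, h]
        simpa [w, (zero_lt_one.trans_le hn).ne'] using (hz i hi).trans_le (h ▸ hz₁)
      · rw [hw i hi₀ hi, hw (i + 1) (by omega) h]
        exact hz i hi
  refine ⟨_, ⟨n, w, by simp [w], by simp [w]; omega, hw_mono, rfl⟩, ?_⟩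
  calc ((n - 2 : ℕ) : ℝ) * ε ^ p = ∑ _j ∈ Finset.Ico 1 (n - 1), ε ^ p := by
        rw [Finset.sum_const, Nat.card_Ico, nsmul_eq_mul, Nat.sub_sub]
    _ ≤ ∑ j ∈ Finset.Ico 1 (n - 1), |f (w (j + 1)) - f (w j)| ^ p := by
        refine Finset.sum_le_sum fun j hj => ?_
        rw [Finset.mem_Ico] at hj
        rw [hw j (by omega) (by omega), hw (j + 1) (by omega) (by omega)]
        exact Real.rpow_le_rpow hε (hjump j (by omega)) hp
    _ ≤ ∑ j ∈ Finset.range n, |f (w (j + 1)) - f (w j)| ^ p :=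
        Finset.sum_le_sum_of_subset_of_nonneg (fun j hj => by simp at hj ⊢; omega)
          fun _ _ _ => Real.rpow_nonneg (abs_nonneg _) p

theorem exists_mem_pVarSums_ge_of_bars {f : ℝ → ℝ} (hf : ContinuousOn f (Icc 0 1)) {p ε : ℝ}
    (hp : 0 ≤ p) (hε : 0 < ε) {k : ℕ} (hk : 2 ≤ k) {u : Fin k → ℝ}
    (hu : ∀ i, u i ∈ Icc (0 : ℝ) 1)
    (hsep : ∀ i j : Fin k, i < j →
      u i < u j ∧ sInf (f '' Icc (u i) (u j)) ≤ min (f (u i)) (f (u j)) - ε) :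
    ∃ S ∈ pVarSums f p, 2 * ((k : ℝ) - 2) * ε ^ p ≤ S := by
  set U : ℕ → ℝ := fun i => if h : i < k then u ⟨i, h⟩ else 0
  have hU : ∀ i < k, U i ∈ Icc (0 : ℝ) 1 := fun i hi => by simpa [U, hi] using hu ⟨i, hi⟩
  have hdip : ∀ i, i + 1 < k →
      ∃ v ∈ Ioo (U i) (U (i + 1)), ε ≤ f (U i) - f v ∧ ε ≤ f (U (i + 1)) - f v := by
    intro i hi
    obtain ⟨hlt, hinf⟩ := hsep ⟨i, by omega⟩ ⟨i + 1, hi⟩ (Fin.mk_lt_mk.2 i.lt_succ_self)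
    simp only [U, dif_pos hi, dif_pos (by omega : i < k)]
    exact (hf.mono (Icc_subset_Icc (hu _).1 (hu _).2)).exists_mem_Ioo_le_sub_of_sInf_le
      hlt.le hε hinf
  choose! V hV hVf using hdip
  obtain ⟨S, hS, hle⟩ := exists_mem_pVarSums_ge (f := f) (z := interleave U V) hp hε.le
    (n := 2 * (k - 1)) (by omega) (by simpa using (hU 0 (by omega)).1)
    (by simpa using (hU (k - 1) (by omega)).2)
    (Nat.forall_lt_two_mul_iff.2 fun i hi => ⟨by simpa using (hV i (by omega)).1, by
      simpa using (hV i (by omega)).2⟩)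
    (Nat.forall_lt_two_mul_iff.2 fun i hi => by
      obtain ⟨hdown, hup⟩ := hVf i (by omega)
      simp only [interleave_two_mul, interleave_two_mul_add_one, interleave_two_mul_add_two]
      exact ⟨le_abs.2 (Or.inr (by linarith)), le_abs.2 (Or.inl (by linarith))⟩)
  refine ⟨S, hS, le_of_eq_of_le ?_ hle⟩
  rw [show 2 * (k - 1) - 2 = 2 * (k - 2) by omega]
  push_cast [Nat.cast_sub hk]
  ring

theorem barsCount_le_of_mem_upperBounds_pVarSums {f : ℝ → ℝ} (hf : ContinuousOn f (Icc 0 1))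
    {p ε M : ℝ} (hp : 0 ≤ p) (hε : 0 < ε) (hM : M ∈ upperBounds (pVarSums f p)) :
    (barsCount f 1 ε : ℝ) ≤ M / 2 * ε ^ (-p) + 2 := by
  have hM₀ := nonneg_of_mem_upperBounds_pVarSums hM
  unfold barsCount
  refine Nat.cast_sSup_le ⟨0, Fin.elim0, fun i => i.elim0, fun i => i.elim0, fun i => i.elim0⟩ ?_
  rintro k ⟨u, hu, -, hsep⟩
  rcases lt_or_ge k 2 with hk | hk
  · have : (k : ℝ) ≤ 2 := by exact_mod_cast hk.le
    have : 0 ≤ M / 2 * ε ^ (-p) := by positivity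
    linarith
  · obtain ⟨S, hS, hle⟩ := exists_mem_pVarSums_ge_of_bars hf hp hε hk hu hsep
    have hεp : 0 < ε ^ p := Real.rpow_pos_of_pos hε p
    have hk' : (k : ℝ) - 2 ≤ M / (2 * ε ^ p) := by
      rw [le_div_iff₀ (by positivity)]
      linarith [hM hS]
    rw [Real.rpow_neg hε.le, ← div_eq_mul_inv, div_div]
    linarith

theorem exists_bddAbove_pVarSums_of_varIndex_lt {f : ℝ → ℝ} {r : ℝ}
    (h : varIndex f < ENNReal.ofReal r) : ∃ p, 1 ≤ p ∧ p < r ∧ BddAbove (pVarSums f p) := by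
  obtain ⟨_, ⟨p, rfl, hp, hbdd⟩, hlt⟩ := sInf_lt_iff.1 h
  exact ⟨p, hp, (ENNReal.ofReal_lt_ofReal_iff_of_nonneg (by linarith)).1 hlt, hbdd⟩

/-- For continuous `f : [0,1] → ℝ` and any `δ > 0`,
`N^ε_f = O(ε^{-V(f)-δ})` as `ε → 0`. -/
theorem barsCount_isBigO_varIndex (f : ℝ → ℝ) (hf : ContinuousOn f (Icc (0:ℝ) 1))
    (hV : varIndex f ≠ ⊤) :
    ∀ δ > (0:ℝ), ∃ C > (0:ℝ), ∃ ε₀ > (0:ℝ), ∀ ε : ℝ, 0 < ε → ε < ε₀ →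
      (barsCount f 1 ε : ℝ) ≤ C * ε ^ (-((varIndex f).toReal + δ)) := by
  intro δ hδ
  obtain ⟨p, hp, hpδ, M, hM⟩ := exists_bddAbove_pVarSums_of_varIndex_lt
    ((ENNReal.lt_ofReal_iff_toReal_lt hV).2 (lt_add_of_pos_right _ hδ))
  have hM₀ := nonneg_of_mem_upperBounds_pVarSums hM
  refine ⟨M / 2 + 2, by positivity, 1, one_pos, fun ε hε hε₁ => ?_⟩
  have h₁ : 1 ≤ ε ^ (-p) := Real.one_le_rpow_of_pos_of_le_one_of_nonpos hε hε₁.le (by linarith)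
  calc (barsCount f 1 ε : ℝ) ≤ M / 2 * ε ^ (-p) + 2 :=
        barsCount_le_of_mem_upperBounds_pVarSums hf (by linarith) hε hM
    _ ≤ (M / 2 + 2) * ε ^ (-p) := by nlinarith
    _ ≤ (M / 2 + 2) * ε ^ (-((varIndex f).toReal + δ)) :=
        mul_le_mul_of_nonneg_left
          (Real.rpow_le_rpow_of_exponent_ge hε hε₁.le (by linarith)) (by positivity)
end

section
/- For any continuous function f : [0,1] → ℝ and any p ≥ 1 with finite p-variation, the number of bars of length ≥ ε satisfies N^ε_f ≤ ‖f‖_{p-var}^p / ε^p for every ε > 0. -/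
open Set

lemma sum_chain_le0 (f : ℝ → ℝ) (p : ℝ) (hbdd : BddAbove (pVarSums f p))
    (n : ℕ) (w : ℕ → ℝ) (hmono : ∀ i < n, w i < w (i+1))
    (h0 : w 0 = 0) (h1 : w n ≤ 1) :
    ∑ i ∈ Finset.range n, |f (w (i + 1)) - f (w i)| ^ p ≤ sSup (pVarSums f p) := by
  rcases eq_or_lt_of_le h1 with h1e | h1l
  · exact le_csSup hbdd ⟨n, w, h0, h1e, hmono, rfl⟩
  · set u : ℕ → ℝ := fun i => if i ≤ n then w i else 1 with hu
    have hmem : (∑ i ∈ Finset.range (n+1), |f (u (i+1)) - f (u i)| ^ p) ∈ pVarSums f p := by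
      refine ⟨n+1, u, ?_, ?_, ?_, rfl⟩
      · simp [hu, h0]
      · simp [hu]
      · intro i hi
        by_cases hi' : i < n
        · have e1 : u i = w i := by simp [hu, hi'.le]
          have e2 : u (i+1) = w (i+1) := by simp [hu, Nat.succ_le_of_lt hi']
          rw [e1, e2]; exact hmono i hi'
        · have e1 : u i = w i := by simp [hu, (by omega : i ≤ n)]
          have e2 : u (i+1) = 1 := by
            show (if i+1 ≤ n then w (i+1) else 1) = 1
            rw [if_neg (by omega)]
          rw [e1, e2]
          have : i = n := by omega
          rw [this]; exact h1l
    refine le_trans ?_ (le_csSup hbdd hmem)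
    rw [Finset.sum_range_succ]
    have he : ∑ i ∈ Finset.range n, |f (w (i + 1)) - f (w i)| ^ p
        = ∑ i ∈ Finset.range n, |f (u (i + 1)) - f (u i)| ^ p := by
      refine Finset.sum_congr rfl fun i hi => ?_
      have hi' := Finset.mem_range.1 hi
      have e1 : u i = w i := by simp [hu, hi'.le]
      have e2 : u (i+1) = w (i+1) := by simp [hu, Nat.succ_le_of_lt hi']
      rw [e1, e2]
    rw [he]
    have := Real.rpow_nonneg (abs_nonneg (f (u (n+1)) - f (u n))) p
    linarith

lemma sum_chain_le (f : ℝ → ℝ) (p : ℝ) (hbdd : BddAbove (pVarSums f p))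
    (n : ℕ) (w : ℕ → ℝ) (hmono : ∀ i < n, w i < w (i+1))
    (h0 : 0 ≤ w 0) (h1 : w n ≤ 1) :
    ∑ i ∈ Finset.range n, |f (w (i + 1)) - f (w i)| ^ p ≤ sSup (pVarSums f p) := by
  rcases eq_or_lt_of_le h0 with h0e | h0l
  · exact sum_chain_le0 f p hbdd n w hmono h0e.symm h1
  · set u : ℕ → ℝ := fun i => if i = 0 then 0 else w (i - 1) with hu
    have hmono' : ∀ i < n + 1, u i < u (i+1) := by
      intro i hi
      rcases Nat.eq_zero_or_pos i with rfl | hipos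
      · simpa [hu] using h0l
      · have e1 : u i = w (i-1) := by simp [hu, Nat.pos_iff_ne_zero.1 hipos]
        have e2 : u (i+1) = w i := by simp [hu]
        rw [e1, e2]
        have : w (i-1) < w (i-1+1) := hmono (i-1) (by omega)
        simpa [Nat.sub_add_cancel hipos] using this
    have hlast : u (n+1) ≤ 1 := by simpa [hu] using h1
    have h0' : u 0 = 0 := by simp [hu]
    refine le_trans ?_ (sum_chain_le0 f p hbdd (n+1) u hmono' h0' hlast)
    rw [Finset.sum_range_succ']
    have he : ∑ i ∈ Finset.range n, |f (w (i + 1)) - f (w i)| ^ p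
        = ∑ i ∈ Finset.range n, |f (u (i + 1 + 1)) - f (u (i + 1))| ^ p := by
      refine Finset.sum_congr rfl fun i hi => ?_
      have e1 : u (i+1) = w i := by simp [hu]
      have e2 : u (i+1+1) = w (i+1) := by simp [hu]
      rw [e1, e2]
    rw [he]
    have := Real.rpow_nonneg (abs_nonneg (f (u (0+1)) - f (u 0))) p
    linarith

lemma exists_min_pt (f : ℝ → ℝ) (hf : ContinuousOn f (Icc (0:ℝ) 1))
    (a b : ℝ) (ha : a ∈ Icc (0:ℝ) 1) (hb : b ∈ Icc (0:ℝ) 1) (hab : a ≤ b) :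
    ∃ x ∈ Icc a b, f x ≤ sInf (f '' Icc a b) := by
  have hsub : Icc a b ⊆ Icc (0:ℝ) 1 := Icc_subset_Icc ha.1 hb.2
  obtain ⟨x, hx, hmin⟩ := isCompact_Icc.exists_isMinOn (nonempty_Icc.2 hab) (hf.mono hsub)
  refine ⟨x, hx, le_csInf (Nonempty.image f (nonempty_Icc.2 hab)) ?_⟩
  rintro y ⟨z, hz, rfl⟩
  exact hmin hz

/-- For continuous `f : [0,1] → ℝ` with finite `p`-variation (`p ≥ 1`), the number of bars
of length `≥ ε` satisfies `N^ε_f ≤ ‖f‖_{p-var}^p / ε^p` for every `ε > 0`. -/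
theorem barsCount_le_pvar (f : ℝ → ℝ) (p : ℝ) (hp : 1 ≤ p)
    (hf : ContinuousOn f (Icc (0:ℝ) 1)) (hbdd : BddAbove (pVarSums f p)) :
    ∀ ε > (0:ℝ), (barsCount f 1 ε : ℝ) ≤ sSup (pVarSums f p) / ε ^ p := by
  intro ε hε
  have hp0 : (0:ℝ) ≤ p := le_trans zero_le_one hp
  have hεp : 0 < ε ^ p := Real.rpow_pos_of_pos hε p
  set S := sSup (pVarSums f p) with hSdef
  have hS0 : (0:ℝ) ≤ S := by
    have hmem : (∑ i ∈ Finset.range 1, |f (((i:ℕ)+1 : ℕ):ℝ) - f ((i:ℕ):ℝ)| ^ p) ∈ pVarSums f p := by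
      refine ⟨1, fun i => (i:ℝ), by norm_num, by norm_num, ?_, by push_cast; ring_nf⟩
      intro i hi; push_cast; linarith
    exact le_trans (Finset.sum_nonneg fun i _ => Real.rpow_nonneg (abs_nonneg _) p)
      (le_csSup hbdd hmem)
  have core : ∀ a b : ℝ, a ∈ Icc (0:ℝ) 1 → b ∈ Icc (0:ℝ) 1 → a < b →
      ε ≤ |f b - f a| → ε ^ p ≤ S := by
    intro a b ha hb hab habs
    have hsum := sum_chain_le f p hbdd 1 (fun i => if i = 0 then a else b)
      (by intro i hi
          have : i = 0 := by omega
          subst this; simpa using hab)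
      (by simpa using ha.1) (by simpa using hb.2)
    rw [Finset.sum_range_one] at hsum
    simp only [show (0:ℕ) + 1 ≠ 0 by omega, if_neg, if_pos, reduceIte] at hsum
    exact le_trans (Real.rpow_le_rpow hε.le habs hp0) hsum
  set T : Set ℕ := {k : ℕ | ∃ u : Fin k → ℝ,
    (∀ i, u i ∈ Icc (0:ℝ) 1) ∧
    (∀ i, sInf (f '' Icc (0:ℝ) 1) + ε ≤ f (u i)) ∧
    (∀ i j : Fin k, i < j →
      u i < u j ∧ sInf (f '' Icc (u i) (u j)) ≤ min (f (u i)) (f (u j)) - ε)} with hTdef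
  have key : ∀ k ∈ T, (k:ℝ) * ε ^ p ≤ S := by
    rintro k ⟨u, hu01, hlow, hpair⟩
    obtain _ | _ | m := k
    · simpa using hS0
    · -- k = 1
      obtain ⟨x, hx, hxle⟩ := exists_min_pt f hf 0 1 (left_mem_Icc.2 zero_le_one)
        (right_mem_Icc.2 zero_le_one) zero_le_one
      have h1 : f x + ε ≤ f (u 0) := by
        have := hlow 0; linarith
      have hne : x ≠ u 0 := by
        intro h; rw [h] at h1; linarith
      rcases lt_or_gt_of_ne hne with hlt | hgt
      · have := core x (u 0) hx (hu01 0) hlt (le_abs.2 (Or.inl (by linarith)))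
        push_cast; linarith
      · have := core (u 0) x (hu01 0) hx hgt (le_abs.2 (Or.inr (by linarith)))
        push_cast; linarith
    · -- k = m + 2
      set U : ℕ → ℝ := fun i => u ⟨min i (m+1), by omega⟩ with hU
      have hUeq : ∀ (i : ℕ) (h : i ≤ m + 1), U i = u ⟨i, by omega⟩ := by
        intro i h
        have he : (⟨min i (m+1), by omega⟩ : Fin (m+2)) = ⟨i, by omega⟩ :=
          Fin.eq_of_val_eq (by simpa using min_eq_left h)
        simp only [hU, he]
      have hpair' : ∀ i, i < m + 1 → U i < U (i+1) ∧
          sInf (f '' Icc (U i) (U (i+1))) ≤ min (f (U i)) (f (U (i+1))) - ε := by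
        intro i hi
        rw [hUeq i (by omega), hUeq (i+1) (by omega)]
        exact hpair ⟨i, by omega⟩ ⟨i+1, by omega⟩ (by simp [Fin.lt_def])
      have hUmem : ∀ j, U j ∈ Icc (0:ℝ) 1 := fun j => hu01 _
      have hdip : ∀ i : ℕ, ∃ x, i < m + 1 →
          (U i < x ∧ x < U (i+1) ∧ f x ≤ min (f (U i)) (f (U (i+1))) - ε) := by
        intro i
        by_cases hi : i < m + 1
        · obtain ⟨hlt, hinf⟩ := hpair' i hi
          obtain ⟨x, hx, hxle⟩ := exists_min_pt f hf (U i) (U (i+1)) (hUmem i)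
            (hUmem (i+1)) hlt.le
          have hfx : f x ≤ min (f (U i)) (f (U (i+1))) - ε := le_trans hxle hinf
          refine ⟨x, fun _ => ⟨?_, ?_, hfx⟩⟩
          · rcases eq_or_lt_of_le hx.1 with he | h
            · exfalso
              have := min_le_left (f (U i)) (f (U (i+1)))
              rw [← he] at hfx; linarith
            · exact h
          · rcases eq_or_lt_of_le hx.2 with he | h
            · exfalso
              have := min_le_right (f (U i)) (f (U (i+1)))
              rw [he] at hfx; linarith
            · exact h
        · exact ⟨0, fun h => absurd h hi⟩
      choose v hv using hdip
      set w : ℕ → ℝ := fun j => if j % 2 = 0 then U (j / 2) else v (j / 2) with hw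
      have hweven : ∀ i, w (2*i) = U i := by
        intro i
        have h1 : (2*i) % 2 = 0 := by omega
        have h2 : (2*i) / 2 = i := by omega
        simp [hw, h1, h2]
      have hwodd : ∀ i, w (2*i+1) = v i := by
        intro i
        have h1 : (2*i+1) % 2 = 1 := by omega
        have h2 : (2*i+1) / 2 = i := by omega
        simp [hw, h1, h2]
      have hmono : ∀ j < 2*m + 2, w j < w (j+1) := by
        intro j hj
        rcases Nat.even_or_odd j with ⟨i, hji⟩ | ⟨i, hji⟩
        · have hje : j = 2*i := by omega
          subst hje
          have hi : i < m + 1 := by omega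
          rw [hweven i, hwodd i]
          exact (hv i hi).1
        · have hje : j = 2*i + 1 := by omega
          subst hje
          have hi : i < m + 1 := by omega
          rw [hwodd i, show 2*i+1+1 = 2*(i+1) by ring, hweven (i+1)]
          exact (hv i hi).2.1
      have hterm : ∀ j ∈ Finset.range (2*m + 2), ε ^ p ≤ |f (w (j+1)) - f (w j)| ^ p := by
        intro j hj
        have hj' := Finset.mem_range.1 hj
        have habs : ε ≤ |f (w (j+1)) - f (w j)| := by
          rcases Nat.even_or_odd j with ⟨i, hji⟩ | ⟨i, hji⟩
          · have hje : j = 2*i := by omega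
            subst hje
            have hi : i < m + 1 := by omega
            rw [hweven i, hwodd i]
            have h3 := (hv i hi).2.2
            have h4 := min_le_left (f (U i)) (f (U (i+1)))
            exact le_abs.2 (Or.inr (by linarith))
          · have hje : j = 2*i + 1 := by omega
            subst hje
            have hi : i < m + 1 := by omega
            rw [hwodd i, show 2*i+1+1 = 2*(i+1) by ring, hweven (i+1)]
            have h3 := (hv i hi).2.2
            have h4 := min_le_right (f (U i)) (f (U (i+1)))
            exact le_abs.2 (Or.inl (by linarith))
        exact Real.rpow_le_rpow hε.le habs hp0
      have hsum := sum_chain_le f p hbdd (2*m + 2) w hmono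
        (by rw [show (0:ℕ) = 2*0 by ring, hweven 0]; exact (hUmem 0).1)
        (by rw [show 2*m+2 = 2*(m+1) by ring, hweven (m+1)]; exact (hUmem (m+1)).2)
      have hlb : ((2*m + 2 : ℕ) : ℝ) * ε ^ p ≤
          ∑ j ∈ Finset.range (2*m + 2), |f (w (j+1)) - f (w j)| ^ p := by
        have := Finset.card_nsmul_le_sum (Finset.range (2*m + 2)) _ _ hterm
        simpa [nsmul_eq_mul] using this
      push_cast at hlb ⊢
      nlinarith [hεp]
  have h0T : (0:ℕ) ∈ T :=
    ⟨fun i => i.elim0, fun i => i.elim0, fun i => i.elim0, fun i => i.elim0⟩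
  have hTbdd : BddAbove T := by
    refine ⟨Nat.floor (S / ε ^ p), fun k hk => Nat.le_floor ?_⟩
    rw [le_div_iff₀ hεp]
    exact key k hk
  have hmemT : barsCount f 1 ε ∈ T := by
    have : barsCount f 1 ε = sSup T := rfl
    rw [this]
    exact Nat.sSup_mem ⟨0, h0T⟩ hTbdd
  rw [le_div_iff₀ hεp]
  exact key _ hmemT
end

section
/- Let N : (0,∞) → ℕ be nonincreasing and integrable at infinity, let Λ(ε) := ∫_ε^∞ N(a) da, and suppose 2ε·Λ(ε) → Q as ε → 0 with error O(ε) (i.e., |2εΛ(ε) − Q| ≤ Cε). Then 2ε²N(ε) → Q as ε → 0; more precisely, for every small δ > 0, Q/(1+δ) + O(ε) ≤ 2ε²N(ε) ≤ Q/(1−δ) + O(ε). -/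
/-!
Since `N` is nonincreasing, `Λ(a) - Λ(b) = ∫_a^b N` lies between `(b - a) N(b)` and `(b - a) N(a)`.
Taking `[a, b] = [ε, ε(1+δ)]` and `[ε(1-δ), ε]` and inserting `2aΛ(a) = Q + O(a)` at both ends
traps `2ε²N(ε)` between `Q/(1+δ)` and `Q/(1-δ)` up to an error `O(ε/δ)`; letting `ε → 0` and
then `δ → 0` gives the limit.
-/

open Set MeasureTheory Filter Topology

theorem AntitoneOn.mul_sub_le_intervalIntegral {f : ℝ → ℝ} {a b : ℝ} (hab : a ≤ b)
    (hf : AntitoneOn f (Icc a b)) : f b * (b - a) ≤ ∫ x in a..b, f x := by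
  have := intervalIntegral.integral_mono_on (μ := volume) hab intervalIntegrable_const
    (AntitoneOn.intervalIntegrable (by rwa [uIcc_of_le hab])) fun x hx => hf hx ⟨hab, le_rfl⟩ hx.2
  simpa [mul_comm] using this

theorem AntitoneOn.intervalIntegral_le_mul_sub {f : ℝ → ℝ} {a b : ℝ} (hab : a ≤ b)
    (hf : AntitoneOn f (Icc a b)) : ∫ x in a..b, f x ≤ f a * (b - a) := by
  have := intervalIntegral.integral_mono_on (μ := volume) hab
    (AntitoneOn.intervalIntegrable (by rwa [uIcc_of_le hab])) intervalIntegrable_const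
    fun x hx => hf ⟨le_rfl, hab⟩ hx hx.1
  simpa [mul_comm] using this

section Tauberian

variable {f : ℝ → ℝ} {Q C δ ε : ℝ} (hf : AntitoneOn f (Ioi 0))
  (hint : ∀ ε > 0, IntegrableOn f (Ioi ε))
  (hΛ : ∀ ε > 0, |2 * ε * (∫ a in Ioi ε, f a) - Q| ≤ C * ε)
include hf hint hΛ

theorem div_one_add_sub_le_of_integral_Ioi (hδ : 0 < δ) (hε : 0 < ε) :
    Q / (1 + δ) - 2 * C / δ * ε ≤ 2 * ε ^ 2 * f ε := by
  have hε' : ε ≤ ε * (1 + δ) := by nlinarith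
  have hdiff : (∫ a in Ioi ε, f a) - ∫ a in Ioi (ε * (1 + δ)), f a ≤ f ε * (ε * δ) := by
    rw [intervalIntegral.integral_Ioi_sub_Ioi (hint ε hε) hε']
    convert (hf.mono fun x hx => hε.trans_le hx.1).intervalIntegral_le_mul_sub hε' using 2
    ring
  have hΛε := (abs_le.1 (hΛ ε hε)).1
  have hΛε' := (abs_le.1 (hΛ (ε * (1 + δ)) (by positivity))).2
  have key : δ * Q - 2 * C * (1 + δ) * ε ≤ δ * (1 + δ) * (2 * ε ^ 2 * f ε) := by
    nlinarith [mul_le_mul_of_nonneg_left hdiff (by positivity : 0 ≤ 2 * ε * (1 + δ))]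
  calc Q / (1 + δ) - 2 * C / δ * ε = (δ * Q - 2 * C * (1 + δ) * ε) / (δ * (1 + δ)) := by
        field_simp
    _ ≤ 2 * ε ^ 2 * f ε := by rw [div_le_iff₀ (by positivity)]; linarith

theorem le_div_one_sub_add_of_integral_Ioi (hδ : 0 < δ) (hδ1 : δ < 1) (hε : 0 < ε) :
    2 * ε ^ 2 * f ε ≤ Q / (1 - δ) + 2 * C / δ * ε := by
  have hε₀ : 0 < ε * (1 - δ) := by nlinarith
  have hε' : ε * (1 - δ) ≤ ε := by nlinarith
  have hdiff : f ε * (ε * δ) ≤ (∫ a in Ioi (ε * (1 - δ)), f a) - ∫ a in Ioi ε, f a := by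
    rw [intervalIntegral.integral_Ioi_sub_Ioi (hint _ hε₀) hε']
    convert (hf.mono fun x hx => hε₀.trans_le hx.1).mul_sub_le_intervalIntegral hε' using 2
    ring
  have hΛε := (abs_le.1 (hΛ ε hε)).1
  have hΛε' := (abs_le.1 (hΛ (ε * (1 - δ)) hε₀)).2
  have key : δ * (1 - δ) * (2 * ε ^ 2 * f ε) ≤ δ * Q + 2 * C * (1 - δ) * ε := by
    nlinarith [mul_le_mul_of_nonneg_left hdiff (by nlinarith : 0 ≤ 2 * ε * (1 - δ))]
  calc 2 * ε ^ 2 * f ε ≤ (δ * Q + 2 * C * (1 - δ) * ε) / (δ * (1 - δ)) := by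
        rw [le_div_iff₀ (by nlinarith)]; linarith
    _ = Q / (1 - δ) + 2 * C / δ * ε := by
        field_simp [(by linarith : (1 - δ) ≠ 0)]

end Tauberian

theorem eventually_lt_of_forall_lower_bound {g φ : ℝ → ℝ} {Q a : ℝ}
    (hφ : Tendsto φ (𝓝[>] 0) (𝓝 Q))
    (hg : ∀ᶠ δ in 𝓝[>] 0, ∃ K, ∀ ε > 0, φ δ - K * ε ≤ g ε) (ha : a < Q) :
    ∀ᶠ ε in 𝓝[>] 0, a < g ε := by
  obtain ⟨δ, hδa, K, hK⟩ := ((hφ.eventually (lt_mem_nhds ha)).and hg).exists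
  have hlim : Tendsto (fun ε => φ δ - K * ε) (𝓝[>] 0) (𝓝 (φ δ)) :=
    ((continuous_const.sub (continuous_const.mul continuous_id)).tendsto' 0 _
      (by simp)).mono_left nhdsWithin_le_nhds
  filter_upwards [hlim.eventually (lt_mem_nhds hδa), self_mem_nhdsWithin] with ε hε hε₀
  exact hε.trans_le (hK ε hε₀)

theorem eventually_gt_of_forall_upper_bound {g φ : ℝ → ℝ} {Q b : ℝ}
    (hφ : Tendsto φ (𝓝[>] 0) (𝓝 Q))
    (hg : ∀ᶠ δ in 𝓝[>] 0, ∃ K, ∀ ε > 0, g ε ≤ φ δ + K * ε) (hb : Q < b) :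
    ∀ᶠ ε in 𝓝[>] 0, g ε < b := by
  have := eventually_lt_of_forall_lower_bound (g := fun ε => -g ε) hφ.neg
    (hg.mono fun δ ⟨K, hK⟩ => ⟨K, fun ε hε => by linarith [hK ε hε]⟩) (neg_lt_neg hb)
  exact this.mono fun ε hε => neg_lt_neg_iff.1 hε

/-- Tauberian step: if `N : (0,∞) → ℕ` is nonincreasing, integrable at infinity, and
`Λ(ε) = ∫_ε^∞ N(a) da` satisfies `|2εΛ(ε) - Q| ≤ Cε`, then `2ε²N(ε) → Q` as `ε → 0`;
more precisely for every small `δ > 0`,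
`Q/(1+δ) + O(ε) ≤ 2ε²N(ε) ≤ Q/(1-δ) + O(ε)`. -/
theorem tauberian_barsCount (N : ℝ → ℕ) (Q C : ℝ)
    (hmono : AntitoneOn (fun a => (N a : ℝ)) (Ioi (0:ℝ)))
    (hint : ∀ ε > (0:ℝ), IntegrableOn (fun a => (N a : ℝ)) (Ioi ε))
    (hΛ : ∀ ε > (0:ℝ), |2 * ε * (∫ a in Ioi ε, (N a : ℝ)) - Q| ≤ C * ε) :
    Filter.Tendsto (fun ε => 2 * ε ^ 2 * (N ε : ℝ)) (nhdsWithin 0 (Ioi 0)) (nhds Q) ∧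
    ∀ δ : ℝ, 0 < δ → δ < 1 → ∃ C' > (0:ℝ), ∀ ε > (0:ℝ),
      Q / (1 + δ) - C' * ε ≤ 2 * ε ^ 2 * (N ε : ℝ) ∧
      2 * ε ^ 2 * (N ε : ℝ) ≤ Q / (1 - δ) + C' * ε := by
  have lower δ (hδ : 0 < δ) ε (hε : 0 < ε) := div_one_add_sub_le_of_integral_Ioi hmono hint hΛ hδ hε
  have upper δ (hδ : 0 < δ) (hδ1 : δ < 1) ε (hε : 0 < ε) :=
    le_div_one_sub_add_of_integral_Ioi hmono hint hΛ hδ hδ1 hε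
  refine ⟨tendsto_order.2 ⟨fun a ha => ?_, fun b hb => ?_⟩, fun δ hδ hδ1 => ?_⟩
  · refine eventually_lt_of_forall_lower_bound (φ := fun δ => Q / (1 + δ)) ?_
      (eventually_mem_nhdsWithin.mono fun δ hδ => ⟨_, lower δ hδ⟩) ha
    have hφ : ContinuousAt (fun δ : ℝ => Q / (1 + δ)) 0 := by fun_prop (disch := norm_num)
    simpa using hφ.tendsto.mono_left nhdsWithin_le_nhds
  · refine eventually_gt_of_forall_upper_bound (φ := fun δ => Q / (1 - δ)) ?_
      (eventually_of_mem (Ioo_mem_nhdsGT one_pos) fun δ hδ => ⟨_, upper δ hδ.1 hδ.2⟩) hb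
    have hφ : ContinuousAt (fun δ : ℝ => Q / (1 - δ)) 0 := by fun_prop (disch := norm_num)
    simpa using hφ.tendsto.mono_left nhdsWithin_le_nhds
  · refine ⟨max (2 * C / δ) 1, by positivity, fun ε hε => ?_⟩
    have hK : 2 * C / δ * ε ≤ max (2 * C / δ) 1 * ε := by gcongr; exact le_max_left _ _
    exact ⟨by linarith [lower δ hδ ε hε], by linarith [upper δ hδ hδ1 ε hε]⟩
end
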